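/- arXiv:1511.06196 — 5 statements merged into one kernel-verified Lean document; each statement's English description precedes it below -/
import Mathlib

section
/- Let (X, F, π) be a probability space, g : X → ℝ a nonnegative measurable function with π(g) > 0 and π(g²) < ∞, and define ρ = π(g²)/π(g)². Let u¹,…,u^N be i.i.d. samples from π and define the self-normalized importance sampling estimator μ^N(φ) = (Σₙ φ(uⁿ)g(uⁿ)) / (Σₘ g(uᵐ)). Then for every measurable φ with |φ| ≤ 1, the mean squared error satisfies E[(μ^N(φ) − μ(φ))²] ≤ 4ρ/N, where μ(φ) = π(φg)/π(g). -/
/-!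
With `S_f = ∑ₙ f(uⁿ)` and `c = N π(g)`, the estimator is `S_{φg} / S_g` and the target is
`N π(φg) / c`. Since `|S_{φg}| ≤ S_g`, the ratio `r = S_{φg} / S_g` lies in `[-1, 1]`, and
`S_{φg} / S_g - N π(φg) / c = ((S_{φg} - N π(φg)) - r (S_g - c)) / c`, so the squared error is
at most `2 / c²` times the sum of the squared deviations of two sums of i.i.d. variables. Each of
those has mean `N Var(f) ≤ N π(f²)`, and `π((φg)²) ≤ π(g²)`, giving `4 N π(g²) / c² = 4ρ / N`.
-/

open MeasureTheory ProbabilityTheory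

lemma div_sub_div_sq_le_of_abs_le {a b α β : ℝ} (hab : |a| ≤ b) (hβ : 0 < β) :
    (a / b - α / β) ^ 2 ≤ 2 / β ^ 2 * ((a - α) ^ 2 + (b - β) ^ 2) := by
  obtain ⟨r, hr, hid⟩ : ∃ r : ℝ, r ^ 2 ≤ 1 ∧ a / b - α / β = ((a - α) - r * (b - β)) / β := by
    refine ⟨a / b, ?_, ?_⟩
    · rw [sq_le_one_iff_abs_le_one, abs_div]
      exact div_le_one_of_le₀ (hab.trans (le_abs_self b)) (abs_nonneg b)
    rcases eq_or_ne b 0 with rfl | hb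
    · obtain rfl : a = 0 := abs_nonpos_iff.1 hab
      ring
    · field_simp
      ring
  rw [hid, div_pow, div_mul_eq_mul_div 2, div_le_div_iff_of_pos_right (by positivity)]
  nlinarith [sq_nonneg (a - α + r * (b - β)), mul_nonneg (sub_nonneg.2 hr) (sq_nonneg (b - β))]

section IIDSum

variable {ι X : Type*} [Fintype ι] [MeasurableSpace X] {μ : Measure X} [IsProbabilityMeasure μ]
  {f : X → ℝ}

lemma memLp_sum_comp_eval {p : ENNReal} (hf : MemLp f p μ) :
    MemLp (fun u : ι → X => ∑ i, f (u i)) p (Measure.pi fun _ : ι => μ) :=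
  memLp_finsetSum _ fun i _ => hf.comp_measurePreserving (measurePreserving_eval _ i)

lemma integral_sum_comp_eval (hf : Integrable f μ) :
    ∫ u, ∑ i, f (u i) ∂(Measure.pi fun _ : ι => μ) = Fintype.card ι * ∫ x, f x ∂μ := by
  rw [integral_finsetSum _ fun i _ => integrable_comp_eval hf]
  simp [integral_comp_eval (μ := fun _ : ι => μ) hf.aestronglyMeasurable]

lemma integral_sum_comp_eval_sub_sq_le (hf : MemLp f 2 μ) :
    ∫ u, (∑ i, f (u i) - Fintype.card ι * ∫ x, f x ∂μ) ^ 2 ∂(Measure.pi fun _ : ι => μ)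
      ≤ Fintype.card ι * ∫ x, f x ^ 2 ∂μ := by
  have hvar : Var[fun u => ∑ i, f (u i); Measure.pi fun _ : ι => μ]
      = Fintype.card ι * Var[f; μ] := by
    simpa [← Finset.sum_fn] using variance_sum_pi (μ := fun _ : ι => μ) fun _ => hf
  rw [← integral_sum_comp_eval (hf.integrable one_le_two),
    ← variance_eq_integral (memLp_sum_comp_eval hf).aemeasurable, hvar]
  gcongr
  exact variance_le_expectation_sq hf.aestronglyMeasurable

lemma integrable_sum_comp_eval_sub_sq (hf : MemLp f 2 μ) (m : ℝ) :
    Integrable (fun u : ι → X => (∑ i, f (u i) - m) ^ 2) (Measure.pi fun _ : ι => μ) :=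
  ((memLp_sum_comp_eval hf).sub (memLp_const m)).integrable_sq

lemma integral_sum_div_sum_sub_div_sq_le [Nonempty ι] {h : X → ℝ} (hf : MemLp f 2 μ)
    (hh : MemLp h 2 μ) (hfh : ∀ x, |f x| ≤ h x) (hh_pos : 0 < ∫ x, h x ∂μ) :
    ∫ u, ((∑ i, f (u i)) / (∑ i, h (u i)) - (∫ x, f x ∂μ) / ∫ x, h x ∂μ) ^ 2
        ∂(Measure.pi fun _ : ι => μ)
      ≤ 2 * (∫ x, f x ^ 2 ∂μ + ∫ x, h x ^ 2 ∂μ) / (Fintype.card ι * (∫ x, h x ∂μ) ^ 2) := by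
  set N : ℝ := (Fintype.card ι : ℝ)
  set c := ∫ x, h x ∂μ
  have hN : 0 < N := Nat.cast_pos.2 Fintype.card_pos
  have hpt (u : ι → X) :
      ((∑ i, f (u i)) / (∑ i, h (u i)) - (∫ x, f x ∂μ) / c) ^ 2
        ≤ 2 / (N * c) ^ 2 * ((∑ i, f (u i) - N * ∫ x, f x ∂μ) ^ 2 + (∑ i, h (u i) - N * c) ^ 2) := by
    have hsum : |∑ i, f (u i)| ≤ ∑ i, h (u i) :=
      (Finset.abs_sum_le_sum_abs _ _).trans (Finset.sum_le_sum fun i _ => hfh (u i))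
    simpa only [mul_div_mul_left _ _ hN.ne'] using
      div_sub_div_sq_le_of_abs_le (α := N * ∫ x, f x ∂μ) hsum (by positivity : 0 < N * c)
  have hf_int := integrable_sum_comp_eval_sub_sq (ι := ι) hf (N * ∫ x, f x ∂μ)
  have hh_int := integrable_sum_comp_eval_sub_sq (ι := ι) hh (N * c)
  calc _ ≤ ∫ u, 2 / (N * c) ^ 2 * ((∑ i, f (u i) - N * ∫ x, f x ∂μ) ^ 2
          + (∑ i, h (u i) - N * c) ^ 2) ∂(Measure.pi fun _ => μ) :=
        integral_mono_of_nonneg (ae_of_all _ fun _ => sq_nonneg _)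
          ((hf_int.add hh_int).const_mul _) (ae_of_all _ hpt)
    _ = 2 / (N * c) ^ 2 *
          ((∫ u, (∑ i, f (u i) - N * ∫ x, f x ∂μ) ^ 2 ∂(Measure.pi fun _ => μ))
            + ∫ u, (∑ i, h (u i) - N * c) ^ 2 ∂(Measure.pi fun _ => μ)) := by
        rw [integral_const_mul, integral_add hf_int hh_int]
    _ ≤ 2 / (N * c) ^ 2 * (N * ∫ x, f x ^ 2 ∂μ + N * ∫ x, h x ^ 2 ∂μ) := by
        gcongr
        exacts [integral_sum_comp_eval_sub_sq_le hf, integral_sum_comp_eval_sub_sq_le hh]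
    _ = 2 * (∫ x, f x ^ 2 ∂μ + ∫ x, h x ^ 2 ∂μ) / (N * c ^ 2) := by
        field_simp

end IIDSum

/-- Non-asymptotic MSE bound for self-normalized importance sampling over
bounded test functions: `E[(μ^N(φ) - μ(φ))²] ≤ 4ρ/N` with `ρ = π(g²)/π(g)²`. -/
theorem stmt_0 {X : Type*} [MeasurableSpace X] (π : Measure X) [IsProbabilityMeasure π]
    (g : X → ℝ) (hgm : Measurable g) (hg0 : ∀ x, 0 ≤ g x)
    (hgpos : 0 < ∫ x, g x ∂π)
    (hg2 : Integrable (fun x => (g x) ^ 2) π)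
    (N : ℕ) (hN : 0 < N)
    (φ : X → ℝ) (hφm : Measurable φ) (hφ : ∀ x, |φ x| ≤ 1) :
    ∫ u : Fin N → X,
        ((∑ n, φ (u n) * g (u n)) / (∑ m, g (u m))
          - (∫ x, φ x * g x ∂π) / (∫ x, g x ∂π)) ^ 2
      ∂(Measure.pi fun _ => π)
      ≤ 4 * ((∫ x, (g x) ^ 2 ∂π) / (∫ x, g x ∂π) ^ 2) / N := by
  have hφg_le (x : X) : |φ x * g x| ≤ g x := by
    rw [abs_mul, abs_of_nonneg (hg0 x)]
    exact mul_le_of_le_one_left (hg0 x) (hφ x)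
  have hg : MemLp g 2 π := (memLp_two_iff_integrable_sq hgm.aestronglyMeasurable).2 hg2
  have hφg : MemLp (fun x => φ x * g x) 2 π :=
    hg.of_le (hφm.mul hgm).aestronglyMeasurable <| ae_of_all _ fun x => by
      simpa [abs_of_nonneg (hg0 x)] using hφg_le x
  have hφg_sq : ∫ x, (φ x * g x) ^ 2 ∂π ≤ ∫ x, g x ^ 2 ∂π :=
    integral_mono hφg.integrable_sq hg2 fun x =>
      sq_le_sq.2 (by rw [abs_of_nonneg (hg0 x)]; exact hφg_le x)
  have : Nonempty (Fin N) := ⟨⟨0, hN⟩⟩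
  calc _ ≤ 2 * (∫ x, (φ x * g x) ^ 2 ∂π + ∫ x, g x ^ 2 ∂π) / (N * (∫ x, g x ∂π) ^ 2) := by
        simpa using integral_sum_div_sum_sub_div_sq_le (ι := Fin N) hφg hg hφg_le hgpos
    _ ≤ 2 * (∫ x, g x ^ 2 ∂π + ∫ x, g x ^ 2 ∂π) / (N * (∫ x, g x ∂π) ^ 2) := by gcongr
    _ = 4 * ((∫ x, g x ^ 2 ∂π) / (∫ x, g x ∂π) ^ 2) / N := by
        field_simp
        ring
end

section
/- Let D₁ be a positive-definite bounded operator, D₂ a positive semi-definite bounded operator, and T a bounded self-adjoint nonnegative operator on a Hilbert space, such that D₁^{-1}T and (D₁+D₂)^{-1}T are bounded with discrete spectra. Then Tr(D₁^{-1}T) ≥ Tr((D₁+D₂)^{-1}T). -/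
/-!
For `y = D₁ v = (D₁ + D₂) u`, expanding the nonnegative quadratic form `⟪v - u, D₁ (v - u)⟫`
gives `⟪y, v⟫ - ⟪y, u⟫ = ⟪v - u, D₁ (v - u)⟫ + ⟪u, D₂ u⟫ ≥ 0`, i.e. `(D₁ + D₂)⁻¹ ≤ D₁⁻¹` in the
Loewner order. Conjugating by the self-adjoint `T^{1/2}` preserves this, so every diagonal entry
of `T^{1/2} (D₁ + D₂)⁻¹ T^{1/2}` is dominated by the corresponding entry of `T^{1/2} D₁⁻¹ T^{1/2}`,
and the traces compare term by term.
-/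

open ContinuousLinearMap

theorem LinearMap.IsSymmetric.inner_sub_inner_eq_of_apply_eq {H : Type*}
    [SeminormedAddCommGroup H] [InnerProductSpace ℝ H] {D₁ D₂ : H →ₗ[ℝ] H} (hD₁ : D₁.IsSymmetric)
    {y u v : H} (hv : D₁ v = y) (hu : D₁ u + D₂ u = y) :
    (inner ℝ y v : ℝ) - inner ℝ y u
      = inner ℝ (v - u) (D₁ (v - u)) + inner ℝ u (D₂ u) := by
  have hvu : (inner ℝ v (D₁ u) : ℝ) = inner ℝ u (D₁ v) := by
    rw [← hD₁, real_inner_comm]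
  have hyv : (inner ℝ y v : ℝ) = inner ℝ v (D₁ v) := by rw [← hv, real_inner_comm]
  have hyu : (inner ℝ y u : ℝ) = inner ℝ u (D₁ v) := by rw [← hv, real_inner_comm]
  have hyu' : (inner ℝ y u : ℝ) = inner ℝ u (D₁ u) + inner ℝ u (D₂ u) := by
    rw [← hu, real_inner_comm, inner_add_right]
  simp only [map_sub, inner_sub_left, inner_sub_right]
  linarith

theorem inner_apply_le_of_comp_eq_one_of_add_comp_eq_one {H : Type*} [NormedAddCommGroup H]
    [InnerProductSpace ℝ H] {D₁ D₂ E₁ E₂ : H →L[ℝ] H} (hD₁ : (D₁ : H →ₗ[ℝ] H).IsSymmetric)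
    (hD₁pos : ∀ x, 0 ≤ (inner ℝ x (D₁ x) : ℝ)) (hD₂pos : ∀ x, 0 ≤ (inner ℝ x (D₂ x) : ℝ))
    (hE₁ : D₁ ∘L E₁ = 1) (hE₂ : (D₁ + D₂) ∘L E₂ = 1) (y : H) :
    (inner ℝ y (E₂ y) : ℝ) ≤ inner ℝ y (E₁ y) := by
  have hv : D₁ (E₁ y) = y := by simpa using congrArg (· y) hE₁
  have hu : D₁ (E₂ y) + D₂ (E₂ y) = y := by simpa using congrArg (· y) hE₂
  have h := hD₁.inner_sub_inner_eq_of_apply_eq (D₂ := D₂) hv hu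
  simp only [coe_coe] at h
  linarith [hD₁pos (E₁ y - E₂ y), hD₂pos (E₂ y)]

theorem ContinuousLinearMap.inner_comp_comp_apply_of_isSymmetric {𝕜 H : Type*} [RCLike 𝕜]
    [SeminormedAddCommGroup H] [InnerProductSpace 𝕜 H] {S : H →L[𝕜] H}
    (hS : (S : H →ₗ[𝕜] H).IsSymmetric) (F : H →L[𝕜] H) (x : H) :
    inner 𝕜 x ((S ∘L F ∘L S) x) = inner 𝕜 (S x) (F (S x)) :=
  (hS x (F (S x))).symm

theorem stmt_11_general {H : Type*} [NormedAddCommGroup H] [InnerProductSpace ℝ H]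
    [CompleteSpace H] {ι : Type*} (e : HilbertBasis ι ℝ H)
    (D₁ D₂ Thalf E₁ E₂ : H →L[ℝ] H)
    (hD₁SA : IsSelfAdjoint D₁) (hD₁pos : ∀ x, x ≠ 0 → 0 < (inner ℝ x (D₁ x) : ℝ))
    (hD₂pos : ∀ x, 0 ≤ (inner ℝ x (D₂ x) : ℝ))
    (hThalfSA : IsSelfAdjoint Thalf)
    (hE₁' : D₁ ∘L E₁ = 1)
    (hE₂' : (D₁ + D₂) ∘L E₂ = 1) :
    (∑' i, ENNReal.ofReal (inner ℝ (e i) ((Thalf ∘L E₂ ∘L Thalf) (e i)) : ℝ))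
      ≤ (∑' i, ENNReal.ofReal (inner ℝ (e i) ((Thalf ∘L E₁ ∘L Thalf) (e i)) : ℝ)) := by
  have hD₁nonneg : ∀ x, 0 ≤ (inner ℝ x (D₁ x) : ℝ) := fun x => by
    rcases eq_or_ne x 0 with rfl | hx
    · simp
    · exact (hD₁pos x hx).le
  refine ENNReal.tsum_le_tsum fun i => ENNReal.ofReal_le_ofReal ?_
  rw [inner_comp_comp_apply_of_isSymmetric hThalfSA.isSymmetric,
    inner_comp_comp_apply_of_isSymmetric hThalfSA.isSymmetric]
  exact inner_apply_le_of_comp_eq_one_of_add_comp_eq_one hD₁SA.isSymmetric hD₁nonneg hD₂pos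
    hE₁' hE₂' _

/-- Trace monotonicity: for `D₁` positive definite, `D₂` positive
semi-definite, and `T` self-adjoint nonnegative (with nonnegative self-adjoint
square root `T^{1/2}`), one has `Tr(D₁⁻¹T) ≥ Tr((D₁+D₂)⁻¹T)`, where the
(possibly infinite) traces are computed in the symmetrized form
`Tr(D⁻¹T) = Tr(T^{1/2} D⁻¹ T^{1/2})` along an orthonormal Hilbert basis. -/
theorem stmt_11 {H : Type*} [NormedAddCommGroup H] [InnerProductSpace ℝ H]
    [CompleteSpace H] {ι : Type*} (e : HilbertBasis ι ℝ H)
    (D₁ D₂ T Thalf E₁ E₂ : H →L[ℝ] H)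
    (hD₁SA : IsSelfAdjoint D₁) (hD₁pos : ∀ x, x ≠ 0 → 0 < (inner ℝ x (D₁ x) : ℝ))
    (hD₂SA : IsSelfAdjoint D₂) (hD₂pos : ∀ x, 0 ≤ (inner ℝ x (D₂ x) : ℝ))
    (hTSA : IsSelfAdjoint T) (hTpos : ∀ x, 0 ≤ (inner ℝ x (T x) : ℝ))
    (hThalfSA : IsSelfAdjoint Thalf) (hThalfpos : ∀ x, 0 ≤ (inner ℝ x (Thalf x) : ℝ))
    (hThalf : Thalf ∘L Thalf = T)
    (hE₁ : E₁ ∘L D₁ = 1) (hE₁' : D₁ ∘L E₁ = 1)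
    (hE₂ : E₂ ∘L (D₁ + D₂) = 1) (hE₂' : (D₁ + D₂) ∘L E₂ = 1) :
    (∑' i, ENNReal.ofReal (inner ℝ (e i) ((Thalf ∘L E₂ ∘L Thalf) (e i)) : ℝ))
      ≤ (∑' i, ENNReal.ofReal (inner ℝ (e i) ((Thalf ∘L E₁ ∘L Thalf) (e i)) : ℝ)) :=
  stmt_11_general e D₁ D₂ Thalf E₁ E₂ hD₁SA hD₁pos hD₂pos hThalfSA hE₁' hE₂'
end

section
/- In the one-step linear Gaussian filtering model with M = H = Q = R = I on an infinite-dimensional separable Hilbert space and prior covariance P trace class, the standard-proposal operator is A_st = P + I and the optimal-proposal operator is A_op = P/2; hence τ_st = Tr(P + I) = ∞ while τ_op = Tr(P/2) < ∞. -/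
open ContinuousLinearMap

/-! The two operator identities are algebra: `S ∘ I ∘ S = S²` and `S ∘ (c I) ∘ S = c S²`.
Along an orthonormal family the diagonal entries of `P + I` are `⟪eᵢ, P eᵢ⟫ + 1 ≥ 1`, so
infinitely many of them sum to `∞`, whereas those of `P / 2` are half those of `P`, whose sum
is finite by assumption. -/

open scoped ENNReal

namespace ContinuousLinearMap

variable {X ι : Type*} [NormedAddCommGroup X] [InnerProductSpace ℝ X]

/-- The trace of `T` along the family `e`, with negative diagonal entries truncated to `0`;
for a positive operator and a Hilbert basis this is `Tr T ∈ [0, ∞]`. -/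
noncomputable def diagTrace (e : ι → X) (T : X →L[ℝ] X) : ℝ≥0∞ :=
  ∑' i, ENNReal.ofReal (inner ℝ (e i) (T (e i)))

theorem diagTrace_smul (e : ι → X) (T : X →L[ℝ] X) {c : ℝ} (hc : 0 ≤ c) :
    diagTrace e (c • T) = ENNReal.ofReal c * diagTrace e T := by
  simp only [diagTrace, smul_apply, inner_smul_right, ENNReal.ofReal_mul hc,
    ENNReal.tsum_mul_left]

theorem diagTrace_smul_lt_top {e : ι → X} {T : X →L[ℝ] X} (hT : diagTrace e T < ⊤) {c : ℝ}
    (hc : 0 ≤ c) : diagTrace e (c • T) < ⊤ := by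
  rw [diagTrace_smul e T hc]
  exact ENNReal.mul_lt_top ENNReal.ofReal_lt_top hT

theorem diagTrace_one [Infinite ι] {e : ι → X} (he : Orthonormal ℝ e) :
    diagTrace e 1 = ⊤ := by
  simp only [diagTrace, one_apply_eq_self, real_inner_self_eq_norm_sq, he.1, one_pow,
    ENNReal.ofReal_one, ENNReal.tsum_const_eq_top_of_ne_zero one_ne_zero]

theorem diagTrace_le_add_left (e : ι → X) {T : X →L[ℝ] X} (hT : ∀ x, 0 ≤ inner ℝ x (T x))
    (S : X →L[ℝ] X) : diagTrace e S ≤ diagTrace e (T + S) :=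
  ENNReal.tsum_le_tsum fun i => ENNReal.ofReal_le_ofReal <| by
    simpa only [add_apply, inner_add_right] using le_add_of_nonneg_left (hT (e i))

theorem diagTrace_add_one_eq_top [Infinite ι] {e : ι → X} (he : Orthonormal ℝ e)
    {T : X →L[ℝ] X} (hT : ∀ x, 0 ≤ inner ℝ x (T x)) : diagTrace e (T + 1) = ⊤ :=
  top_le_iff.1 <| diagTrace_one he ▸ diagTrace_le_add_left e hT 1

theorem comp_smul_one_comp (S : X →L[ℝ] X) (c : ℝ) :
    S ∘L (c • (1 : X →L[ℝ] X)) ∘L S = c • (S ∘L S) := by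
  ext x
  simp

end ContinuousLinearMap

theorem stmt_13_general {X : Type*} [NormedAddCommGroup X] [InnerProductSpace ℝ X]
    {ι : Type*} [Infinite ι] (e : HilbertBasis ι ℝ X)
    (P Phalf PIhalf : X →L[ℝ] X)
    (hPpos : ∀ x, 0 ≤ (inner ℝ x (P x) : ℝ))
    (hPhalf : Phalf ∘L Phalf = P)
    (hPIhalf : PIhalf ∘L PIhalf = P + 1)
    (hPtc : (∑' i, ENNReal.ofReal (inner ℝ (e i) (P (e i)) : ℝ)) < ⊤) :
    PIhalf ∘L (1 : X →L[ℝ] X) ∘L PIhalf = P + 1 ∧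
    Phalf ∘L (((2 : ℝ)⁻¹) • (1 : X →L[ℝ] X)) ∘L Phalf = ((2 : ℝ)⁻¹) • P ∧
    (∑' i, ENNReal.ofReal (inner ℝ (e i) ((P + 1) (e i)) : ℝ)) = ⊤ ∧
    (∑' i, ENNReal.ofReal (inner ℝ (e i) ((((2 : ℝ)⁻¹) • P) (e i)) : ℝ)) < ⊤ :=
  ⟨by simpa only [← mul_def, one_mul] using hPIhalf,
   by rw [comp_smul_one_comp, hPhalf],
   diagTrace_add_one_eq_top e.orthonormal hPpos,
   diagTrace_smul_lt_top hPtc (by norm_num)⟩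

/-- Example 4.4: with `M = H = Q = R = I` on an infinite-dimensional Hilbert
space and `P` trace class, the standard- and optimal-proposal operators are
`A_st = (P+I)^{1/2} I (P+I)^{1/2} = P + I` and
`A_op = P^{1/2} (2I)⁻¹ P^{1/2} = P/2`, so `τ_st = Tr(P+I) = ∞` while
`τ_op = Tr(P/2) < ∞`. Traces along an orthonormal Hilbert basis with infinite
index set. -/
theorem stmt_13 {X : Type*} [NormedAddCommGroup X] [InnerProductSpace ℝ X]
    [CompleteSpace X] {ι : Type*} [Infinite ι] (e : HilbertBasis ι ℝ X)
    (P Phalf PIhalf : X →L[ℝ] X)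
    (hPSA : IsSelfAdjoint P) (hPpos : ∀ x, 0 ≤ (inner ℝ x (P x) : ℝ))
    (hPhalfSA : IsSelfAdjoint Phalf) (hPhalfpos : ∀ x, 0 ≤ (inner ℝ x (Phalf x) : ℝ))
    (hPhalf : Phalf ∘L Phalf = P)
    (hPIhalfSA : IsSelfAdjoint PIhalf)
    (hPIhalfpos : ∀ x, 0 ≤ (inner ℝ x (PIhalf x) : ℝ))
    (hPIhalf : PIhalf ∘L PIhalf = P + 1)
    (hPtc : (∑' i, ENNReal.ofReal (inner ℝ (e i) (P (e i)) : ℝ)) < ⊤) :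
    PIhalf ∘L (1 : X →L[ℝ] X) ∘L PIhalf = P + 1 ∧
    Phalf ∘L (((2 : ℝ)⁻¹) • (1 : X →L[ℝ] X)) ∘L Phalf = ((2 : ℝ)⁻¹) • P ∧
    (∑' i, ENNReal.ofReal (inner ℝ (e i) ((P + 1) (e i)) : ℝ)) = ⊤ ∧
    (∑' i, ENNReal.ofReal (inner ℝ (e i) ((((2 : ℝ)⁻¹) • P) (e i)) : ℝ)) < ⊤ :=
  stmt_13_general e P Phalf PIhalf hPpos hPhalf hPIhalf hPtc
end

section
/- Let π be a probability measure, g ≥ 0 measurable with π(g) > 0, φ measurable, and let μ^N, π^N denote the self-normalized importance sampling estimator and the empirical measure of N i.i.d. samples from π, respectively. Then for any 0 < θ < 1 the pathwise bound |μ^N(φ) − μ(φ)| ≤ |π^N(φg) − π(φg)|/π(g) + |π^N(φg)|·|π^N(g) − π(g)|/π(g)² + max_{1≤n≤N}|φ(uⁿ)| · |π^N(g) − π(g)|^{1+θ}/π(g)^{1+θ} holds. -/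
/-!
Write `A/B` for the self-normalised estimate and `a/b` for its target. Expanding
`1/B = 1/b - (B - b)/b² + (B - b)²/(B b²)` splits the error into the two linear terms
plus a remainder `A (B - b)²/(B b²)`; since `|A| ≤ M B` with `M = maxₙ |φ(uⁿ)|`, the
remainder is at most `M ((B - b)/b)²`. When `B < b` the relative error `(B - b)/b` lies
in `(0, 1)`, so its square is dominated by its `(1 + θ)`-th power. When `B ≥ b` the
expansion can stop after the first-order term, because then `B b ≥ b²`.
-/

open MeasureTheory

lemma Real.sq_le_rpow_one_add {t θ : ℝ} (ht0 : 0 < t) (ht1 : t ≤ 1) (hθ : θ ≤ 1) :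
    t ^ 2 ≤ t ^ (1 + θ) := by
  have h := Real.rpow_le_rpow_of_exponent_ge ht0 ht1 (by push_cast; linarith : 1 + θ ≤ ((2 : ℕ) : ℝ))
  rwa [Real.rpow_natCast] at h

lemma abs_div_sub_div_le_of_le {A B a b : ℝ} (hb : 0 < b) (hbB : b ≤ B) :
    |A / B - a / b| ≤ |A - a| / b + |A| * |B - b| / b ^ 2 := by
  have hB : 0 < B := hb.trans_le hbB
  have hsplit : A / B - a / b = (A - a) / b - A * (B - b) / (B * b) := by
    field_simp; ring
  have hlin : |A * (B - b) / (B * b)| ≤ |A| * |B - b| / b ^ 2 := by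
    rw [abs_div, abs_mul, abs_of_pos (mul_pos hB hb)]
    exact div_le_div_of_nonneg_left (by positivity) (by positivity) (by nlinarith)
  calc |A / B - a / b| ≤ |(A - a) / b| + |A * (B - b) / (B * b)| := by
        rw [hsplit]; exact abs_sub _ _
    _ ≤ |A - a| / b + |A| * |B - b| / b ^ 2 := by
        rw [abs_div, abs_of_pos hb]; linarith

lemma abs_div_sub_div_le_of_lt {A B a b M θ : ℝ} (hB : 0 < B) (hBb : B < b)
    (hAB : |A| ≤ M * B) (hθ : θ ≤ 1) :
    |A / B - a / b| ≤ |A - a| / b + |A| * |B - b| / b ^ 2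
      + M * |B - b| ^ (1 + θ) / b ^ (1 + θ) := by
  have hb : 0 < b := hB.trans hBb
  set t := (b - B) / b with ht
  have ht0 : 0 < t := div_pos (by linarith) hb
  have ht1 : t ≤ 1 := by rw [ht, div_le_one hb]; linarith
  have hsplit : A / B - a / b
      = (A - a) / b + A * (b - B) / b ^ 2 + A * (b - B) ^ 2 / (B * b ^ 2) := by
    field_simp; ring
  have hlin : |A * (b - B) / b ^ 2| = |A| * |B - b| / b ^ 2 := by
    rw [abs_div, abs_mul, abs_of_pos (by positivity : (0 : ℝ) < b ^ 2), abs_sub_comm b B]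
  have hrem : |A * (b - B) ^ 2 / (B * b ^ 2)| ≤ M * |B - b| ^ (1 + θ) / b ^ (1 + θ) := by
    have hM : 0 ≤ M := nonneg_of_mul_nonneg_left ((abs_nonneg A).trans hAB) hB
    calc |A * (b - B) ^ 2 / (B * b ^ 2)| = |A| * (b - B) ^ 2 / (B * b ^ 2) := by
          rw [abs_div, abs_mul, abs_of_pos (by positivity : (0 : ℝ) < B * b ^ 2),
            abs_of_nonneg (sq_nonneg (b - B))]
      _ ≤ M * B * (b - B) ^ 2 / (B * b ^ 2) := by gcongr
      _ = M * t ^ 2 := by rw [ht]; field_simp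
      _ ≤ M * t ^ (1 + θ) := by gcongr; exact Real.sq_le_rpow_one_add ht0 ht1 hθ
      _ = M * |B - b| ^ (1 + θ) / b ^ (1 + θ) := by
          rw [ht, Real.div_rpow (by linarith) hb.le, abs_sub_comm,
            abs_of_pos (by linarith : (0 : ℝ) < b - B), mul_div_assoc]
  calc |A / B - a / b|
      ≤ |(A - a) / b| + |A * (b - B) / b ^ 2| + |A * (b - B) ^ 2 / (B * b ^ 2)| := by
        rw [hsplit]; exact (abs_add_le _ _).trans (add_le_add_left (abs_add_le _ _) _)
    _ ≤ _ := by rw [abs_div, abs_of_pos hb, hlin]; linarith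

lemma abs_div_sub_div_le_rpow {A B a b M θ : ℝ} (hB : 0 < B) (hb : 0 < b)
    (hAB : |A| ≤ M * B) (hθ : θ ≤ 1) :
    |A / B - a / b| ≤ |A - a| / b + |A| * |B - b| / b ^ 2
      + M * |B - b| ^ (1 + θ) / b ^ (1 + θ) := by
  rcases le_or_gt b B with hbB | hBb
  · have hM : 0 ≤ M := nonneg_of_mul_nonneg_left ((abs_nonneg A).trans hAB) hB
    have hrem : 0 ≤ M * |B - b| ^ (1 + θ) / b ^ (1 + θ) := by positivity
    linarith [abs_div_sub_div_le_of_le (A := A) (a := a) hb hbB]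
  · exact abs_div_sub_div_le_of_lt hB hBb hAB hθ

lemma abs_sum_mul_le_iSup_mul_sum {ι : Type*} [Fintype ι] (f w : ι → ℝ)
    (hw : ∀ i, 0 ≤ w i) :
    |∑ i, f i * w i| ≤ (⨆ i, |f i|) * ∑ i, w i := by
  have hf : ∀ i, |f i| ≤ ⨆ j, |f j| :=
    le_ciSup (Set.finite_range fun j ↦ |f j|).bddAbove
  calc |∑ i, f i * w i| ≤ ∑ i, |f i * w i| := Finset.abs_sum_le_sum_abs _ _
    _ ≤ ∑ i, (⨆ j, |f j|) * w i := by
        gcongr with i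
        rw [abs_mul, abs_of_nonneg (hw i)]
        exact mul_le_mul_of_nonneg_right (hf i) (hw i)
    _ = (⨆ i, |f i|) * ∑ i, w i := (Finset.mul_sum _ _ _).symm

theorem stmt_18_general {X : Type*} [MeasurableSpace X] (π : Measure X)
    (g : X → ℝ)
    (hg0 : ∀ x, 0 ≤ g x) (hgpos : 0 < ∫ x, g x ∂π)
    (φ : X → ℝ)
    (N : ℕ) (u : Fin N → X)
    (hNg : 0 < (N : ℝ)⁻¹ * ∑ n, g (u n))
    (θ : ℝ) (hθ1 : θ < 1) :
    |((N : ℝ)⁻¹ * ∑ n, φ (u n) * g (u n)) / ((N : ℝ)⁻¹ * ∑ n, g (u n))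
        - (∫ x, φ x * g x ∂π) / (∫ x, g x ∂π)|
      ≤ |(N : ℝ)⁻¹ * (∑ n, φ (u n) * g (u n)) - ∫ x, φ x * g x ∂π|
            / (∫ x, g x ∂π)
        + |(N : ℝ)⁻¹ * ∑ n, φ (u n) * g (u n)|
            * |(N : ℝ)⁻¹ * (∑ n, g (u n)) - ∫ x, g x ∂π|
            / (∫ x, g x ∂π) ^ 2
        + (⨆ n : Fin N, |φ (u n)|)
            * |(N : ℝ)⁻¹ * (∑ n, g (u n)) - ∫ x, g x ∂π| ^ (1 + θ)
            / (∫ x, g x ∂π) ^ (1 + θ) := by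
  have hmean : |(N : ℝ)⁻¹ * ∑ n, φ (u n) * g (u n)|
      ≤ (⨆ n : Fin N, |φ (u n)|) * ((N : ℝ)⁻¹ * ∑ n, g (u n)) := by
    rw [abs_mul, abs_of_nonneg (by positivity), mul_left_comm]
    gcongr
    exact abs_sum_mul_le_iSup_mul_sum _ _ fun n ↦ hg0 (u n)
  exact abs_div_sub_div_le_rpow hNg hgpos hmean hθ1.le

/-- Lemma 5.2 (Doucet–Lindsten type pathwise ratio bound): for any `0 < θ < 1`,
`|μ^N(φ) - μ(φ)| ≤ |π^N(φg) - π(φg)|/π(g) + |π^N(φg)| |π^N(g) - π(g)|/π(g)²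
+ (max_n |φ(uⁿ)|) |π^N(g) - π(g)|^{1+θ}/π(g)^{1+θ}`. -/
theorem stmt_18 {X : Type*} [MeasurableSpace X] (π : Measure X)
    [IsProbabilityMeasure π] (g : X → ℝ) (hgm : Measurable g)
    (hg0 : ∀ x, 0 ≤ g x) (hgpos : 0 < ∫ x, g x ∂π)
    (φ : X → ℝ) (hφm : Measurable φ)
    (N : ℕ) (hN : 0 < N) (u : Fin N → X)
    (hNg : 0 < (N : ℝ)⁻¹ * ∑ n, g (u n))
    (θ : ℝ) (hθ0 : 0 < θ) (hθ1 : θ < 1) :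
    |((N : ℝ)⁻¹ * ∑ n, φ (u n) * g (u n)) / ((N : ℝ)⁻¹ * ∑ n, g (u n))
        - (∫ x, φ x * g x ∂π) / (∫ x, g x ∂π)|
      ≤ |(N : ℝ)⁻¹ * (∑ n, φ (u n) * g (u n)) - ∫ x, φ x * g x ∂π|
            / (∫ x, g x ∂π)
        + |(N : ℝ)⁻¹ * ∑ n, φ (u n) * g (u n)|
            * |(N : ℝ)⁻¹ * (∑ n, g (u n)) - ∫ x, g x ∂π|
            / (∫ x, g x ∂π) ^ 2
        + (⨆ n : Fin N, |φ (u n)|)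
            * |(N : ℝ)⁻¹ * (∑ n, g (u n)) - ∫ x, g x ∂π| ^ (1 + θ)
            / (∫ x, g x ∂π) ^ (1 + θ) :=
  stmt_18_general π g hg0 hgpos φ N u hNg θ hθ1
end

section
/- Let σ, σ_obs > 0 and consider A_st = ((p+q)/r) I and A_op = (p/(q+r)) I, the operators arising from one step of filtering initialized at P = pI with M = H = I, Q = qI, R = rI in ℝ^d. Then Tr(A_op) ≤ Tr(A_st), with Tr(A_st)/Tr(A_op) = (p+q)(q+r)/(pr); in particular as r → 0 with p, q fixed, Tr(A_st) → ∞ while Tr(A_op) remains bounded by pd/q. -/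
open Matrix Filter

/-! Both operators are scalar matrices, so each trace is `d` times its scalar and everything reduces
to the scalar inequalities `p / (q + r) ≤ p / r ≤ (p + q) / r` and `p / (q + r) ≤ p / q`; the
divergence is that of `(p + q) / r` as `r → 0⁺`. -/

theorem Matrix.trace_smul_one {n R : Type*} [Fintype n] [DecidableEq n] [Semiring R] (c : R) :
    (c • (1 : Matrix n n R)).trace = c * Fintype.card n := by
  rw [trace_smul, trace_one, smul_eq_mul]

section ScalarBounds

variable {𝕜 : Type*} [Field 𝕜] [LinearOrder 𝕜] [IsStrictOrderedRing 𝕜]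

theorem div_add_le_add_div {p q r : 𝕜} (hp : 0 ≤ p) (hq : 0 ≤ q) (hr : 0 < r) :
    p / (q + r) ≤ (p + q) / r :=
  calc p / (q + r) ≤ p / r := div_le_div_of_nonneg_left hp hr (le_add_of_nonneg_left hq)
    _ ≤ (p + q) / r := div_le_div_of_nonneg_right (le_add_of_nonneg_right hq) hr.le

variable [TopologicalSpace 𝕜] [OrderTopology 𝕜]

theorem tendsto_const_div_nhdsGT_zero {c : 𝕜} (hc : 0 < c) :
    Tendsto (fun r : 𝕜 => c / r) (nhdsWithin 0 (Set.Ioi 0)) atTop := by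
  simpa only [div_eq_mul_inv] using tendsto_inv_nhdsGT_zero.const_mul_atTop hc

end ScalarBounds

/-- For `A_st = ((p+q)/r)I` and `A_op = (p/(q+r))I` in `ℝ^d`:
`Tr(A_op) ≤ Tr(A_st)`, the ratio `Tr(A_st)/Tr(A_op) = (p+q)(q+r)/(pr)`,
`Tr(A_op) ≤ pd/q` stays bounded, while `Tr(A_st) → ∞` as `r → 0⁺`. -/
theorem stmt_19 (d : ℕ) (hd : 0 < d) (p q : ℝ) (hp : 0 < p) (hq : 0 < q) :
    (∀ r : ℝ, 0 < r →
      ((p / (q + r)) • (1 : Matrix (Fin d) (Fin d) ℝ)).trace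
          ≤ (((p + q) / r) • (1 : Matrix (Fin d) (Fin d) ℝ)).trace ∧
        (((p + q) / r) • (1 : Matrix (Fin d) (Fin d) ℝ)).trace
            / ((p / (q + r)) • (1 : Matrix (Fin d) (Fin d) ℝ)).trace
          = (p + q) * (q + r) / (p * r) ∧
        ((p / (q + r)) • (1 : Matrix (Fin d) (Fin d) ℝ)).trace ≤ p * d / q) ∧
    Tendsto (fun r : ℝ => (((p + q) / r) • (1 : Matrix (Fin d) (Fin d) ℝ)).trace)
      (nhdsWithin 0 (Set.Ioi 0)) atTop := by
  have hd' : (0 : ℝ) < d := Nat.cast_pos.mpr hd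
  simp only [trace_smul_one, Fintype.card_fin]
  refine ⟨fun r hr => ⟨?_, ?_, ?_⟩,
    (tendsto_const_div_nhdsGT_zero (add_pos hp hq)).atTop_mul_const hd'⟩
  · exact mul_le_mul_of_nonneg_right (div_add_le_add_div hp.le hq.le hr) hd'.le
  · field_simp
  · calc p / (q + r) * d ≤ p / q * d :=
          mul_le_mul_of_nonneg_right (div_le_div_of_nonneg_left hp.le hq (by linarith)) hd'.le
      _ = p * d / q := div_mul_eq_mul_div p q d
end
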